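/- If D is an oriented graph whose underlying undirected graph is the complement of a k-partite graph (i.e., V(D) can be partitioned into k cliques of the underlying graph), then the P3 hull number of D satisfies hn_{P3}(D) ≤ 2k. -/

import Mathlib

/-! Basic machinery for convexity on oriented graphs. -/

/-- A directed walk along the arc relation `A` from `u` to `v`,
recorded as the (nonempty) list of its vertices. Its length is `l.length - 1`. -/
def DiWalk {V : Type*} (A : V → V → Prop) (u v : V) (l : List V) : Prop :=
  l.head? = some u ∧ l.getLast? = some v ∧ l.Chain' A

/-- A shortest directed walk (geodesic) from `u` to `v`:
a directed walk of minimum length among all directed `(u,v)`-walks. -/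
def IsGeodesic {V : Type*} (A : V → V → Prop) (u v : V) (l : List V) : Prop :=
  DiWalk A u v l ∧ ∀ l', DiWalk A u v l' → l.length ≤ l'.length

/-- Geodetic interval: `u`, `v`, and all vertices lying on a shortest directed
`(u,v)`-path or on a shortest directed `(v,u)`-path. -/
def geoInterval {V : Type*} (A : V → V → Prop) (u v : V) : Set V :=
  {u, v} ∪ {w | (∃ l, IsGeodesic A u v l ∧ w ∈ l) ∨ (∃ l, IsGeodesic A v u l ∧ w ∈ l)}

/-- P3 interval: `u`, `v`, and all vertices lying on a directed `(u,v)`- or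
`(v,u)`-path of length two. -/
def p3Interval {V : Type*} (A : V → V → Prop) (u v : V) : Set V :=
  {u, v} ∪ {w | (A u w ∧ A w v) ∨ (A v w ∧ A w u)}

/-- P3* interval: `u`, `v`, and all vertices lying on a shortest directed `(u,v)`- or
`(v,u)`-path of length two (i.e. the corresponding endpoints are not adjacent). -/
def p3sInterval {V : Type*} (A : V → V → Prop) (u v : V) : Set V :=
  {u, v} ∪ {w | (A u w ∧ A w v ∧ ¬ A u v) ∨ (A v w ∧ A w u ∧ ¬ A v u)}

/-- A set is convex for the interval function `I` if it is closed under `I`. -/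
def IsConvexSet {V : Type*} (I : V → V → Set V) (C : Set V) : Prop :=
  ∀ u ∈ C, ∀ v ∈ C, I u v ⊆ C

/-- The convex hull of `S`: the smallest convex set containing `S`. -/
def convexHullD {V : Type*} (I : V → V → Set V) (S : Set V) : Set V :=
  ⋂₀ {C | IsConvexSet I C ∧ S ⊆ C}

/-- `S` is an interval set if applying `I` to pairs of `S` covers all vertices. -/
def IsIntervalSet {V : Type*} (I : V → V → Set V) (S : Set V) : Prop :=
  (⋃ u ∈ S, ⋃ v ∈ S, I u v) = Set.univ

/-- `S` is a hull set if its convex hull is the whole vertex set. -/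
def IsHullSet {V : Type*} (I : V → V → Set V) (S : Set V) : Prop :=
  convexHullD I S = Set.univ

/-- The interval number: minimum cardinality of an interval set. -/
noncomputable def intervalNumber {V : Type*} (I : V → V → Set V) : ℕ :=
  sInf {k | ∃ S : Set V, IsIntervalSet I S ∧ S.ncard = k}

/-- The hull number: minimum cardinality of a hull set. -/
noncomputable def hullNumber {V : Type*} (I : V → V → Set V) : ℕ :=
  sInf {k | ∃ S : Set V, IsHullSet I S ∧ S.ncard = k}

/-- `v` is reachable from `u` by a directed walk. -/
def Reach {V : Type*} (A : V → V → Prop) (u v : V) : Prop :=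
  ∃ l, DiWalk A u v l

/-- An oriented graph: no loops and at most one arc between any two vertices. -/
def IsOriented {V : Type*} (A : V → V → Prop) : Prop :=
  ∀ u v, A u v → ¬ A v u

/-- Strong connectivity. -/
def StronglyConnected {V : Type*} (A : V → V → Prop) : Prop :=
  ∀ u v, Reach A u v

/-- Connectivity of the underlying undirected graph. -/
def ConnectedD {V : Type*} (A : V → V → Prop) : Prop :=
  ∀ u v : V, Reach (fun a b => A a b ∨ A b a) u v

/-- A strong component: an equivalence class of mutual reachability. -/
def IsStrongComponent {V : Type*} (A : V → V → Prop) (C : Set V) : Prop :=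
  ∃ v, C = {u | Reach A u v ∧ Reach A v u}

/-- A sink strong component: a strong component with no arc leaving it. -/
def IsSinkComponent {V : Type*} (A : V → V → Prop) (C : Set V) : Prop :=
  IsStrongComponent A C ∧ ∀ u ∈ C, ∀ w, w ∉ C → ¬ A u w

/-- A source strong component: a strong component with no arc entering it. -/
def IsSourceComponent {V : Type*} (A : V → V → Prop) (C : Set V) : Prop :=
  IsStrongComponent A C ∧ ∀ u ∈ C, ∀ w, w ∉ C → ¬ A w u

/-- The out-section of `u`: all vertices reachable from `u`. -/
def outSection {V : Type*} (A : V → V → Prop) (u : V) : Set V :=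
  {w | Reach A u w}

/-- The in-section of `u`: all vertices from which `u` is reachable. -/
def inSection {V : Type*} (A : V → V → Prop) (u : V) : Set V :=
  {w | Reach A w u}

/-- A tournament: an oriented graph where every two distinct vertices are adjacent. -/
def IsTournament {V : Type*} (A : V → V → Prop) : Prop :=
  (∀ u v, A u v → ¬ A v u) ∧ ∀ u v : V, u ≠ v → A u v ∨ A v u

/-- The number of arcs of the digraph given by `A`. -/
noncomputable def arcCount {V : Type*} (A : V → V → Prop) : ℕ :=
  Nat.card {p : V × V // A p.1 p.2}

/-! Within a clique of the partition any two vertices are joined by an arc, and among any three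
such vertices one lies on a directed path of length two between the other two. So a clique with at
least three vertices has a vertex in the P3 interval of two others; removing it and inducting
leaves at most two vertices whose hull contains the whole clique. Taking these vertices in each of
the `k` cliques gives a hull set of size at most `2k`. -/

section ConvexHull

variable {V : Type*} (I : V → V → Set V)

theorem subset_convexHullD (S : Set V) : S ⊆ convexHullD I S :=
  fun _ hx => Set.mem_sInter.mpr fun _ hC => hC.2 hx

theorem convexHullD_subset {S C : Set V} (hC : IsConvexSet I C) (hSC : S ⊆ C) :
    convexHullD I S ⊆ C :=
  fun _ hx => Set.mem_sInter.mp hx C ⟨hC, hSC⟩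

theorem isConvexSet_convexHullD (S : Set V) : IsConvexSet I (convexHullD I S) :=
  fun u hu v hv _ hw => Set.mem_sInter.mpr fun C hC =>
    hC.1 u (Set.mem_sInter.mp hu C hC) v (Set.mem_sInter.mp hv C hC) hw

theorem convexHullD_mono {S T : Set V} (h : S ⊆ T) : convexHullD I S ⊆ convexHullD I T :=
  convexHullD_subset I (isConvexSet_convexHullD I T) (h.trans (subset_convexHullD I T))

theorem hullNumber_le_ncard {S : Set V} (hS : IsHullSet I S) : hullNumber I ≤ S.ncard :=
  Nat.sInf_le ⟨S, hS, rfl⟩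

end ConvexHull

section Tournament

variable {V : Type*} {A : V → V → Prop}

theorem mem_p3Interval_of_adj_of_adj_of_adj {x y z : V} (hxy : A x y ∨ A y x)
    (hxz : A x z ∨ A z x) (hyz : A y z ∨ A z y) :
    x ∈ p3Interval A y z ∨ y ∈ p3Interval A x z ∨ z ∈ p3Interval A x y := by
  simp only [p3Interval, Set.mem_union, Set.mem_ofPred_eq]
  tauto

theorem Finset.exists_mem_p3Interval_of_two_lt_card [DecidableEq V] {S : Finset V}
    (hS : ∀ u ∈ S, ∀ v ∈ S, u ≠ v → A u v ∨ A v u) (hcard : 2 < S.card) :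
    ∃ w ∈ S, ∃ a ∈ S.erase w, ∃ b ∈ S.erase w, w ∈ p3Interval A a b := by
  obtain ⟨x, y, z, hx, hy, hz, hxy, hxz, hyz⟩ := Finset.two_lt_card_iff.mp hcard
  rcases mem_p3Interval_of_adj_of_adj_of_adj (hS x hx y hy hxy) (hS x hx z hz hxz)
      (hS y hy z hz hyz) with h | h | h
  · exact ⟨x, hx, y, Finset.mem_erase.2 ⟨hxy.symm, hy⟩, z, Finset.mem_erase.2 ⟨hxz.symm, hz⟩, h⟩
  · exact ⟨y, hy, x, Finset.mem_erase.2 ⟨hxy, hx⟩, z, Finset.mem_erase.2 ⟨hyz.symm, hz⟩, h⟩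
  · exact ⟨z, hz, x, Finset.mem_erase.2 ⟨hxz, hx⟩, y, Finset.mem_erase.2 ⟨hyz, hy⟩, h⟩

theorem Finset.exists_card_le_two_subset_convexHullD_p3Interval (S : Finset V)
    (hS : ∀ u ∈ S, ∀ v ∈ S, u ≠ v → A u v ∨ A v u) :
    ∃ T : Finset V, T.card ≤ 2 ∧ ↑S ⊆ convexHullD (p3Interval A) ↑T := by
  classical
  induction S using Finset.strongInduction with
  | H S ih =>
    by_cases hcard : S.card ≤ 2
    · exact ⟨S, hcard, subset_convexHullD _ _⟩
    obtain ⟨w, hw, a, ha, b, hb, hwab⟩ :=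
      S.exists_mem_p3Interval_of_two_lt_card hS (not_le.mp hcard)
    obtain ⟨T, hTcard, hT⟩ := ih (S.erase w) (Finset.erase_ssubset hw)
      fun u hu v hv => hS u (Finset.mem_of_mem_erase hu) v (Finset.mem_of_mem_erase hv)
    refine ⟨T, hTcard, fun x hx => ?_⟩
    by_cases hxw : x = w
    · exact hxw ▸ isConvexSet_convexHullD _ _ a (hT ha) b (hT hb) hwab
    · exact hT (Finset.mem_erase.2 ⟨hxw, hx⟩)

end Tournament

theorem stmt_14_general {V : Type*} [Finite V] (A : V → V → Prop)
    (k : ℕ) (f : V → Fin k)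
    (hclique : ∀ u v : V, f u = f v → u ≠ v → A u v ∨ A v u) :
    hullNumber (p3Interval A) ≤ 2 * k := by
  classical
  have := Fintype.ofFinite V
  choose T hTcard hT using fun i : Fin k =>
    (Finset.univ.filter (f · = i)).exists_card_le_two_subset_convexHullD_p3Interval
      (A := A) fun u hu v hv => hclique u v
        ((Finset.mem_filter.1 hu).2.trans (Finset.mem_filter.1 hv).2.symm)
  have hhull : IsHullSet (p3Interval A) ↑(Finset.univ.biUnion T) :=
    Set.eq_univ_of_forall fun x =>
      convexHullD_mono _ (Finset.coe_subset.2 (Finset.subset_biUnion_of_mem T (Finset.mem_univ _)))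
        (hT (f x) (by simp))
  calc hullNumber (p3Interval A)
      ≤ (Finset.univ.biUnion T).card := by
        simpa only [Set.ncard_coe_finset] using hullNumber_le_ncard _ hhull
    _ ≤ Finset.univ.card * 2 := Finset.card_biUnion_le_card_mul _ _ _ fun i _ => hTcard i
    _ = 2 * k := by rw [Finset.card_univ, Fintype.card_fin, mul_comm]

/-- If the underlying graph of an oriented graph `D` is the
complement of a `k`-partite graph (its vertex set is partitioned into `k`
cliques, given by the fibers of `f`), then `hn_{P3}(D) ≤ 2k`. -/
theorem stmt_14 {V : Type*} [Finite V] (A : V → V → Prop) (hA : IsOriented A)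
    (k : ℕ) (f : V → Fin k)
    (hclique : ∀ u v : V, f u = f v → u ≠ v → A u v ∨ A v u) :
    hullNumber (p3Interval A) ≤ 2 * k :=
  stmt_14_general A k f hclique
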